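/- Let (C',φ) be the branch shift of x to y applied to a tree position (C,φ) of G, where x and y are nonadjacent edges of C. Then every edge of C that does not lie on the simple path from x to y has the same width in (C',φ) as it had in (C,φ). -/

import Mathlib

attribute [local instance] Classical.propDecidable

open SimpleGraph

/-! ### Weighted graphs -/

/-- Total weight `w(A,B)` between two vertex sets. -/
noncomputable def setW {V : Type*} [Fintype V] (w : V → V → ℝ) (A B : Set V) : ℝ :=
  ∑ a ∈ A.toFinset, ∑ b ∈ B.toFinset, w a b

/-- The weight of an undirected edge of the weighted graph. -/
noncomputable def sym2w {V : Type*} (w : V → V → ℝ) : Sym2 V → ℝ :=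
  Sym2.lift ⟨fun a b => (w a b + w b a) / 2, fun a b => by ring⟩

/-! ### 3-Cayley trees and tree positions -/

/-- A boundary (leaf) vertex of a tree. -/
def IsLeaf {W : Type*} (C : SimpleGraph W) (z : W) : Prop := (C.neighborSet z).ncard = 1

/-- A 3-Cayley tree: a tree all of whose vertices have degree 1 (boundary) or 3 (interior). -/
def IsCayley {W : Type*} (C : SimpleGraph W) : Prop :=
  C.IsTree ∧ ∀ z : W, (C.neighborSet z).ncard = 1 ∨ (C.neighborSet z).ncard = 3

/-- `(C, φ)` is a tree position for a graph with vertex set `V`. -/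
def IsTreePosition {V W : Type*} (C : SimpleGraph W) (φ : V → W) : Prop :=
  IsCayley C ∧ Function.Injective φ ∧ Set.range φ = {z | IsLeaf C z}

/-- The edge `f` of `C` lies on a simple path from `a` to `b` (in a tree, THE simple path). -/
def passesThrough {W : Type*} (C : SimpleGraph W) (f : Sym2 W) (a b : W) : Prop :=
  ∃ p : C.Walk a b, p.IsPath ∧ f ∈ p.edges

/-- `R(f)`: the set of edges of the weighted graph that pass through the edge `f` of `C`. -/
def REdges {V W : Type*} (w : V → V → ℝ) (C : SimpleGraph W) (φ : V → W) (f : Sym2 W) :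
    Set (Sym2 V) :=
  {e | ∃ u v : V, e = s(u, v) ∧ w u v ≠ 0 ∧ passesThrough C f (φ u) (φ v)}

/-- The width `b(f)` of an edge `f` of `C`: total weight of the edges of `G` through `f`. -/
noncomputable def bWidth {V W : Type*} [Fintype V] (w : V → V → ℝ) (C : SimpleGraph W)
    (φ : V → W) (f : Sym2 W) : ℝ :=
  ∑ e ∈ (REdges w C φ f).toFinset, sym2w w e

/-- The adjacency weight `a(e,g)`: total weight of edges of `G` through both `e` and `g`. -/
noncomputable def adjW {V W : Type*} [Fintype V] (w : V → V → ℝ) (C : SimpleGraph W)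
    (φ : V → W) (e g : Sym2 W) : ℝ :=
  ∑ e' ∈ (REdges w C φ e ∩ REdges w C φ g).toFinset, sym2w w e'

/-- The slope `s(e,g) = w(R(g) \ R(e)) - w(R(g) ∩ R(e))`. -/
noncomputable def slopeW {V W : Type*} [Fintype V] (w : V → V → ℝ) (C : SimpleGraph W)
    (φ : V → W) (e g : Sym2 W) : ℝ :=
  (∑ e' ∈ (REdges w C φ g \ REdges w C φ e).toFinset, sym2w w e') - adjW w C φ e g

/-- `C(f;g)`: vertex set of the subtree obtained by cutting `f` that contains the edge `g`. -/
def sideWith {W : Type*} (C : SimpleGraph W) (f g : Sym2 W) : Set W :=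
  {z | ∃ a, a ∈ g ∧ (C.deleteEdges {f}).Reachable a z}

/-- `C(f;ḡ)`: vertex set of the subtree obtained by cutting `f` that does not contain `g`. -/
def sideOpp {W : Type*} (C : SimpleGraph W) (f g : Sym2 W) : Set W := (sideWith C f g)ᶜ

/-! ### TILO orderings of a weighted graph -/

/-- `A_t`: the initial segment of an ordering. -/
def ordSet {V : Type*} (o : V → ℕ) (t : ℕ) : Set V := {v | o v ≤ t}

/-- The width `b_t` of an ordering. -/
noncomputable def ordWidth {V : Type*} [Fintype V] (w : V → V → ℝ) (o : V → ℕ) (t : ℕ) : ℝ :=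
  setW w (ordSet o t) (ordSet o t)ᶜ

/-- The slope `s_{t,k}` of an ordering, with `vk` the vertex at position `k`. -/
noncomputable def ordSlope {V : Type*} [Fintype V] (w : V → V → ℝ) (o : V → ℕ) (t : ℕ)
    (vk : V) : ℝ :=
  setW w {vk} ((ordSet o t)ᶜ \ {vk}) - setW w {vk} (ordSet o t \ {vk})

/-- The shift from position `a` to position `b`: compose the ordering with the cyclic
permutation of the block of positions between `a` and `b` sending `a` to `b`. -/
def shiftFun {V : Type*} (a b : ℕ) (o : V → ℕ) : V → ℕ := fun v =>
  if o v = a then b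
  else if a < o v ∧ o v ≤ b then o v - 1
  else if b ≤ o v ∧ o v < a then o v + 1
  else o v

/-- The multiset of widths of an ordering, sorted in nonincreasing order. -/
noncomputable def ordWidthList {V : Type*} [Fintype V] (w : V → V → ℝ) (N : ℕ)
    (o : V → ℕ) : List ℝ :=
  ((List.range N).map (ordWidth w o)).insertionSort (· ≥ ·)

/-- Strict lexicographic comparison of sorted width lists. -/
def lexLess (l₁ l₂ : List ℝ) : Prop := List.Lex (· < ·) l₁ l₂

/-- A TILO ordering is weakly reducible when some shift strictly decreases its width. -/
def OrdWeaklyReducible {V : Type*} [Fintype V] (w : V → V → ℝ) (N : ℕ) (o : V → ℕ) : Prop :=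
  ∃ a b : ℕ, a < N ∧ b < N ∧ a ≠ b ∧
    lexLess (ordWidthList w N (shiftFun a b o)) (ordWidthList w N o)

/-! ### Branch shift data -/

/-- The data of a pair of nonadjacent edges `x`, `y` of a tree `C` together with the unique
simple path `p 1, …, p i` from `x` to `y`, the extremal third edges `p 0` (at the common
endpoint of `x` and `p 1`, other endpoint `fv`) and `p (i+1)` (at the common endpoint of `y`
and `p i`, other endpoint `gv`), and the third edges `fE t` at the common endpoint of
`p (t-1)` and `p t` for `2 ≤ t ≤ i`.  The path visits the vertices
`x0, vs 0, vs 1, …, vs i, y1` where `x = s(x0, vs 0)` and `y = s(vs i, y1)`. -/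
structure BranchData {W : Type*} (C : SimpleGraph W) (x y : Sym2 W) where
  i : ℕ
  hi1 : 1 ≤ i
  vs : ℕ → W
  x0 : W
  y1 : W
  fv : W
  gv : W
  p : ℕ → Sym2 W
  fE : ℕ → Sym2 W
  hx : x ∈ C.edgeSet
  hy : y ∈ C.edgeSet
  hnonadj : ∀ z : W, ¬(z ∈ x ∧ z ∈ y)
  hxe : x = s(x0, vs 0)
  hye : y = s(vs i, y1)
  hpe : ∀ t, 1 ≤ t → t ≤ i → p t = s(vs (t - 1), vs t)
  hpedge : ∀ t, 1 ≤ t → t ≤ i → p t ∈ C.edgeSet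
  hvsinj : ∀ t t', t ≤ i → t' ≤ i → vs t = vs t' → t = t'
  hx0 : ∀ t, t ≤ i → x0 ≠ vs t
  hy1 : ∀ t, t ≤ i → y1 ≠ vs t
  hp0 : p 0 = s(vs 0, fv)
  hp0edge : p 0 ∈ C.edgeSet
  hp0x : p 0 ≠ x
  hp0p1 : p 0 ≠ p 1
  hpi1 : p (i + 1) = s(vs i, gv)
  hpi1edge : p (i + 1) ∈ C.edgeSet
  hpi1y : p (i + 1) ≠ y
  hpi1pi : p (i + 1) ≠ p i
  hfE : ∀ t, 2 ≤ t → t ≤ i →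
    fE t ∈ C.edgeSet ∧ vs (t - 1) ∈ fE t ∧ fE t ≠ p (t - 1) ∧ fE t ≠ p t

/-- The parts `P 0, …, P (i+2)` of the partition of the vertices of `G` induced by the
branch shift data. -/
def BranchData.part {V W : Type*} {C : SimpleGraph W} {x y : Sym2 W}
    (d : BranchData C x y) (φ : V → W) : ℕ → Set V := fun t =>
  if t = 0 then φ ⁻¹' (sideOpp C (d.p 0) y)
  else if t = 1 then φ ⁻¹' (sideOpp C x y)
  else if t ≤ d.i then φ ⁻¹' (sideOpp C (d.fE t) y)
  else if t = d.i + 1 then φ ⁻¹' (sideOpp C y x)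
  else φ ⁻¹' (sideOpp C (d.p (d.i + 1)) y)

/-- The tree `C'` obtained by the branch shift of `x` to `y`: detach `e = p 1` from
`v = vs 1` and reattach it at `s = vs i`, reattach the third edge `p 0` at `u = vs 0` to
`v = vs 1`, and reattach the third edge `p (i+1)` at `s = vs i` to `u = vs 0`. -/
def BranchData.shifted {W : Type*} {C : SimpleGraph W} {x y : Sym2 W}
    (d : BranchData C x y) : SimpleGraph W :=
  SimpleGraph.fromEdgeSet
    ((C.edgeSet \ {d.p 1, d.p 0, d.p (d.i + 1)}) ∪
      {s(d.vs 0, d.vs d.i), s(d.vs 1, d.fv), s(d.vs 0, d.gv)})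

/-- The weight function of the branch shift quotient graph `Q`: vertex `u_j` corresponds to
the part `P j`, and the weight of the edge `(u_j, u_l)` is `w(P j, P l)`. -/
noncomputable def BranchData.qw {V W : Type*} [Fintype V] {C : SimpleGraph W} {x y : Sym2 W}
    (d : BranchData C x y) (w : V → V → ℝ) (φ : V → W) :
    Fin (d.i + 3) → Fin (d.i + 3) → ℝ :=
  fun j l => if j = l then 0 else setW w (d.part φ j) (d.part φ l)

/-- The multiset of widths of the edges of a tree position, sorted in nonincreasing order. -/
noncomputable def treeWidthList {V W : Type*} [Fintype V] [Fintype W] (w : V → V → ℝ)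
    (C : SimpleGraph W) (φ : V → W) : List ℝ :=
  ((C.edgeSet.toFinset.val.map (bWidth w C φ)).toList).insertionSort (· ≥ ·)

/-- A tree position is weakly reducible when some branch shift strictly decreases its
width; otherwise it is strongly irreducible (thin). -/
def TPWeaklyReducible {V W : Type*} [Fintype V] [Fintype W] (w : V → V → ℝ)
    (C : SimpleGraph W) (φ : V → W) : Prop :=
  ∃ (x y : Sym2 W) (d : BranchData C x y),
    lexLess (treeWidthList w d.shifted φ) (treeWidthList w C φ)

/-! ### Pinch clusters -/

/-- The boundary weight of a set of vertices. -/
noncomputable def boundaryW {V : Type*} [Fintype V] (w : V → V → ℝ) (A : Set V) : ℝ :=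
  setW w A Aᶜ

/-- `A` is a pinch cluster: whenever adding the vertices `v 1, …, v m` to `A` (resp. removing
them from `A`) produces a set with strictly smaller boundary, some proper initial segment
`v 1, …, v k` added (resp. removed) produces a set with strictly larger boundary. -/
def IsPinchCluster {V : Type*} [Fintype V] (w : V → V → ℝ) (A : Set V) : Prop :=
  ∀ (m : ℕ) (v : ℕ → V),
    (boundaryW w (A ∪ v '' Set.Icc 1 m) < boundaryW w A →
      ∃ k, 1 ≤ k ∧ k < m ∧ boundaryW w A < boundaryW w (A ∪ v '' Set.Icc 1 k)) ∧
    (boundaryW w (A \ v '' Set.Icc 1 m) < boundaryW w A →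
      ∃ k, 1 ≤ k ∧ k < m ∧ boundaryW w A < boundaryW w (A \ v '' Set.Icc 1 k))

/-- `e` is a local minimum of the tree position: each endpoint of `e` is shared with an edge
of strictly greater width whose second endpoint is not a boundary vertex. -/
def IsLocalMinEdge {V W : Type*} [Fintype V] (w : V → V → ℝ) (C : SimpleGraph W)
    (φ : V → W) (e : Sym2 W) : Prop :=
  ∀ z ∈ e, ∃ f ∈ C.edgeSet, z ∈ f ∧ f ≠ e ∧
    bWidth w C φ e < bWidth w C φ f ∧ ∀ z' ∈ f, z' ≠ z → ¬ IsLeaf C z'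


/-!
In a tree, an edge `f = s(z₁, z₂)` is a bridge, so a graph edge passes through `f` exactly when
its endpoints lie on different sides of `f`, i.e. are disconnected in `C - f`; the width of `f`
only depends on this partition. For an off-path edge `f` with image `f'`, the graphs `C - f` and
`C' - f'` have the same connected components: each edge removed by the shift joins vertices that
stay connected in `C' - f'` (through the new edge `s(u, s)` and the rest of the path), and each
new edge joins vertices already connected in `C - f`. Since `f'` joins the two sides of `f`, it is
a bridge of the connected graph `C'`, and the two widths are the same sum.
-/

namespace SimpleGraph

variable {W : Type*} {G G' : SimpleGraph W}

theorem Reachable.of_forall_adj {a b : W} (h : ∀ u v, G.Adj u v → G'.Reachable u v)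
    (hab : G.Reachable a b) : G'.Reachable a b := by
  obtain ⟨p⟩ := hab
  induction p with
  | nil => exact .refl _
  | cons hadj _ ih => exact (h _ _ hadj).trans ih

theorem Reachable.of_mk_eq {a b c e : W} (h : s(a, b) = s(c, e)) (hr : G.Reachable c e) :
    G.Reachable a b := by
  rcases Sym2.eq_iff.mp h with ⟨rfl, rfl⟩ | ⟨rfl, rfl⟩
  exacts [hr, hr.symm]

theorem reachable_of_adj_succ (v : ℕ → W) {m n : ℕ} (hmn : m ≤ n)
    (h : ∀ r, m ≤ r → r < n → G.Adj (v r) (v (r + 1))) : G.Reachable (v m) (v n) := by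
  induction n, hmn using Nat.le_induction with
  | base => exact .refl _
  | succ n hmn ih =>
    exact (ih fun r h₁ h₂ => h r h₁ (by omega)).trans (h n hmn (by omega)).reachable

theorem IsBridge.not_reachable_deleteEdges_of_mem_edges {e : Sym2 W} (he : G.IsBridge e) :
    ∀ {a b : W} (p : G.Walk a b), p.IsTrail → e ∈ p.edges → ¬(G.deleteEdges {e}).Reachable a b
  | _, _, .nil, _, hmem => by simp at hmem
  | a, b, .cons (v := c) hadj q, hp, hmem => by
    rw [Walk.isTrail_cons] at hp
    rcases List.mem_cons.mp hmem with rfl | hmem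
    · have hcb : (G.deleteEdges {s(a, c)}).Reachable c b :=
        ⟨q.toDeleteEdges _ fun e he' h => hp.2 (Set.mem_singleton_iff.mp h ▸ he')⟩
      exact fun hab => isBridge_iff.mp he (hab.trans hcb.symm)
    · have hac : (G.deleteEdges {e}).Adj a c :=
        deleteEdges_adj.mpr ⟨hadj, fun h => hp.2 (Set.mem_singleton_iff.mp h ▸ hmem)⟩
      exact fun hab => he.not_reachable_deleteEdges_of_mem_edges q hp.1 hmem
        (hac.reachable.symm.trans hab)

theorem Preconnected.of_reachable_deleteEdges_iff {z₁ z₂ z₁' z₂' : W} (hG : G.Preconnected)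
    (hadj : G'.Adj z₁' z₂')
    (hiff : ∀ a b, (G.deleteEdges {s(z₁, z₂)}).Reachable a b ↔
      (G'.deleteEdges {s(z₁', z₂')}).Reachable a b)
    (h₁ : (G.deleteEdges {s(z₁, z₂)}).Reachable z₁ z₁')
    (h₂ : (G.deleteEdges {s(z₁, z₂)}).Reachable z₂ z₂') : G'.Preconnected := by
  have hmono {a b : W} (h : (G.deleteEdges {s(z₁, z₂)}).Reachable a b) : G'.Reachable a b :=
    ((hiff a b).mp h).mono (deleteEdges_le _)
  have hz : G'.Reachable z₁ z₂ := (hmono h₁).trans (hadj.reachable.trans (hmono h₂).symm)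
  intro a b
  refine (hG a b).of_forall_adj fun u v huv => ?_
  by_cases he : s(u, v) = s(z₁, z₂)
  · exact Reachable.of_mk_eq he hz
  · exact hmono (deleteEdges_adj.mpr ⟨huv, he⟩).reachable

end SimpleGraph

open SimpleGraph

section Cut

variable {W : Type*} {C C' : SimpleGraph W}

theorem passesThrough_iff_not_reachable_deleteEdges {e : Sym2 W} {a b : W} (he : C.IsBridge e)
    (hab : C.Reachable a b) : passesThrough C e a b ↔ ¬(C.deleteEdges {e}).Reachable a b := by
  refine ⟨fun ⟨p, hp, hmem⟩ => he.not_reachable_deleteEdges_of_mem_edges p hp.isTrail hmem,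
    fun hnr => ?_⟩
  obtain ⟨p⟩ := hab
  by_contra hnp
  exact hnr ⟨p.toPath.1.toDeleteEdges {e} fun e' he' h =>
    hnp ⟨_, p.toPath.2, Set.mem_singleton_iff.mp h ▸ he'⟩⟩

theorem bWidth_eq_of_passesThrough_iff {V : Type*} [Fintype V] (w : V → V → ℝ) (φ : V → W)
    {f f' : Sym2 W} (h : ∀ a b, passesThrough C' f' a b ↔ passesThrough C f a b) :
    bWidth w C' φ f' = bWidth w C φ f := by
  have hR : REdges w C' φ f' = REdges w C φ f := by
    ext
    simp only [REdges, Set.mem_ofPred_eq, h]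
  rw [bWidth, bWidth, hR]

theorem bWidth_eq_of_reachable_deleteEdges_iff {V : Type*} [Fintype V] (w : V → V → ℝ)
    (φ : V → W) {z₁ z₂ z₁' z₂' : W} (hC : C.Preconnected) (hbr : C.IsBridge s(z₁, z₂))
    (hadj : C'.Adj z₁' z₂')
    (hiff : ∀ a b, (C.deleteEdges {s(z₁, z₂)}).Reachable a b ↔
      (C'.deleteEdges {s(z₁', z₂')}).Reachable a b)
    (h₁ : (C.deleteEdges {s(z₁, z₂)}).Reachable z₁ z₁')
    (h₂ : (C.deleteEdges {s(z₁, z₂)}).Reachable z₂ z₂') :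
    bWidth w C' φ s(z₁', z₂') = bWidth w C φ s(z₁, z₂) := by
  have hbr' : C'.IsBridge s(z₁', z₂') := fun h =>
    hbr (h₁.trans (((hiff _ _).mpr h).trans h₂.symm))
  have hC' := hC.of_reachable_deleteEdges_iff hadj hiff h₁ h₂
  refine bWidth_eq_of_passesThrough_iff w φ fun a b => ?_
  rw [passesThrough_iff_not_reachable_deleteEdges hbr' (hC' a b),
    passesThrough_iff_not_reachable_deleteEdges hbr (hC a b), hiff]

end Cut

namespace BranchData

variable {W : Type*} {C : SimpleGraph W} {x y : Sym2 W} (d : BranchData C x y)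

theorem vs_eq_vs_iff {t t' : ℕ} (ht : t ≤ d.i) (ht' : t' ≤ d.i) : d.vs t = d.vs t' ↔ t = t' :=
  ⟨d.hvsinj t t' ht ht', fun h => h ▸ rfl⟩

theorem vs_mem_p_iff {r t : ℕ} (hr₁ : 1 ≤ r) (hr : r ≤ d.i) (ht : t ≤ d.i) :
    d.vs t ∈ d.p r ↔ t + 1 = r ∨ t = r := by
  rw [d.hpe r hr₁ hr, Sym2.mem_iff, d.vs_eq_vs_iff ht (by omega), d.vs_eq_vs_iff ht hr]
  omega

theorem p_one : d.p 1 = s(d.vs 0, d.vs 1) := d.hpe 1 le_rfl d.hi1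

theorem p_succ {r : ℕ} (hr : r < d.i) : d.p (r + 1) = s(d.vs r, d.vs (r + 1)) :=
  d.hpe (r + 1) (by omega) hr

theorem adj_vs_succ {r : ℕ} (hr : r < d.i) : C.Adj (d.vs r) (d.vs (r + 1)) := by
  rw [← mem_edgeSet, ← d.p_succ hr]
  exact d.hpedge (r + 1) (by omega) hr

theorem adj_vs_zero_fv : C.Adj (d.vs 0) d.fv := by
  rw [← mem_edgeSet, ← d.hp0]
  exact d.hp0edge

theorem adj_vs_i_gv : C.Adj (d.vs d.i) d.gv := by
  rw [← mem_edgeSet, ← d.hpi1]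
  exact d.hpi1edge

theorem reachable_vs_deleteEdges {S : Set (Sym2 W)} (hS : ∀ r, 1 ≤ r → r ≤ d.i → d.p r ∉ S)
    {a b : ℕ} (ha : a ≤ d.i) (hb : b ≤ d.i) : (C.deleteEdges S).Reachable (d.vs a) (d.vs b) := by
  wlog hab : a ≤ b generalizing a b
  · exact (this hb ha (by omega)).symm
  refine reachable_of_adj_succ d.vs hab fun r _ hr => deleteEdges_adj.mpr ⟨d.adj_vs_succ ?_, ?_⟩
  · omega
  · rw [← d.p_succ (by omega)]
    exact hS (r + 1) (by omega) (by omega)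

theorem not_adj_vs (hac : C.IsAcyclic) {a b : ℕ} (hab : a + 2 ≤ b) (hb : b ≤ d.i) :
    ¬C.Adj (d.vs a) (d.vs b) := by
  intro h
  refine isAcyclic_iff_forall_adj_isBridge.mp hac h (d.reachable_vs_deleteEdges ?_ (by omega) hb)
  intro r hr₁ hr he
  rw [Set.mem_singleton_iff] at he
  have ha := (d.vs_mem_p_iff hr₁ hr (by omega)).mp (he ▸ Sym2.mem_mk_left _ _)
  have hb := (d.vs_mem_p_iff hr₁ hr hb).mp (he ▸ Sym2.mem_mk_right _ _)
  omega

theorem fv_ne_vs (hac : C.IsAcyclic) {t : ℕ} (ht : t ≤ d.i) : d.fv ≠ d.vs t := by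
  intro h
  have hadj := d.adj_vs_zero_fv
  rw [h] at hadj
  match t, ht with
  | 0, _ => exact hadj.ne rfl
  | 1, _ => exact d.hp0p1 (by rw [d.hp0, d.p_one, h])
  | t + 2, ht => exact d.not_adj_vs hac (by omega) ht hadj

theorem gv_ne_vs (hac : C.IsAcyclic) {t : ℕ} (ht : t ≤ d.i) : d.gv ≠ d.vs t := by
  intro h
  have hadj := d.adj_vs_i_gv
  rw [h] at hadj
  obtain hti | hti | hti : t = d.i ∨ t + 1 = d.i ∨ t + 2 ≤ d.i := by omega
  · exact hadj.ne (by rw [hti])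
  · refine d.hpi1pi ?_
    rw [d.hpi1, h, ← hti, d.p_succ (by omega), Sym2.eq_swap]
  · exact d.not_adj_vs hac hti le_rfl hadj.symm

theorem fv_not_mem_p (hac : C.IsAcyclic) {r : ℕ} (hr₁ : 1 ≤ r) (hr : r ≤ d.i) :
    d.fv ∉ d.p r := by
  rw [d.hpe r hr₁ hr, Sym2.mem_iff]
  rintro (h | h)
  exacts [d.fv_ne_vs hac (by omega) h, d.fv_ne_vs hac hr h]

theorem gv_not_mem_p (hac : C.IsAcyclic) {r : ℕ} (hr₁ : 1 ≤ r) (hr : r ≤ d.i) :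
    d.gv ∉ d.p r := by
  rw [d.hpe r hr₁ hr, Sym2.mem_iff]
  rintro (h | h)
  exacts [d.gv_ne_vs hac (by omega) h, d.gv_ne_vs hac hr h]

theorem p_zero_ne_p (hac : C.IsAcyclic) {r : ℕ} (hr₁ : 1 ≤ r) (hr : r ≤ d.i) :
    d.p 0 ≠ d.p r :=
  ne_of_mem_of_not_mem' (d.hp0 ▸ Sym2.mem_mk_right _ _) (d.fv_not_mem_p hac hr₁ hr)

theorem p_last_ne_p (hac : C.IsAcyclic) {r : ℕ} (hr₁ : 1 ≤ r) (hr : r ≤ d.i) :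
    d.p (d.i + 1) ≠ d.p r :=
  ne_of_mem_of_not_mem' (d.hpi1 ▸ Sym2.mem_mk_right _ _) (d.gv_not_mem_p hac hr₁ hr)

theorem vs_zero_ne_vs_i : d.vs 0 ≠ d.vs d.i := by
  rw [Ne, d.vs_eq_vs_iff (Nat.zero_le _) le_rfl]
  have := d.hi1
  omega

theorem p_zero_ne_p_last (hac : C.IsAcyclic) : d.p 0 ≠ d.p (d.i + 1) := by
  refine ne_of_mem_of_not_mem' (d.hp0 ▸ Sym2.mem_mk_left _ _) ?_
  rw [d.hpi1, Sym2.mem_iff]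
  rintro (h | h)
  exacts [d.vs_zero_ne_vs_i h, d.gv_ne_vs hac (Nat.zero_le _) h.symm]

theorem vs_zero_not_mem_vs_one_fv (hac : C.IsAcyclic) : d.vs 0 ∉ s(d.vs 1, d.fv) := by
  rw [Sym2.mem_iff, d.vs_eq_vs_iff (Nat.zero_le _) d.hi1]
  rintro (h | h)
  exacts [zero_ne_one h, d.fv_ne_vs hac (Nat.zero_le _) h.symm]

theorem mk_vs_one_fv_not_mem_edgeSet (hac : C.IsAcyclic) : s(d.vs 1, d.fv) ∉ C.edgeSet := by
  intro h
  refine isAcyclic_iff_forall_isBridge.mp hac h ?_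
  have h₁ : (C.deleteEdges {s(d.vs 1, d.fv)}).Reachable (d.vs 1) (d.vs 0) :=
    d.reachable_vs_deleteEdges (fun r hr₁ hr he => d.fv_not_mem_p hac hr₁ hr
      (Set.mem_singleton_iff.mp he ▸ Sym2.mem_mk_right _ _)) d.hi1 (Nat.zero_le _)
  have h₂ : (C.deleteEdges {s(d.vs 1, d.fv)}).Adj (d.vs 0) d.fv :=
    deleteEdges_adj.mpr ⟨d.adj_vs_zero_fv, fun he => d.vs_zero_not_mem_vs_one_fv hac
      (Set.mem_singleton_iff.mp he ▸ Sym2.mem_mk_left _ _)⟩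
  exact h₁.trans h₂.reachable

theorem vs_i_not_mem_vs_zero_gv (hac : C.IsAcyclic) : d.vs d.i ∉ s(d.vs 0, d.gv) := by
  rw [Sym2.mem_iff]
  rintro (h | h)
  exacts [d.vs_zero_ne_vs_i h.symm, d.gv_ne_vs hac le_rfl h.symm]

theorem mk_vs_zero_gv_not_mem_edgeSet (hac : C.IsAcyclic) : s(d.vs 0, d.gv) ∉ C.edgeSet := by
  intro h
  refine isAcyclic_iff_forall_isBridge.mp hac h ?_
  have h₁ : (C.deleteEdges {s(d.vs 0, d.gv)}).Reachable (d.vs 0) (d.vs d.i) :=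
    d.reachable_vs_deleteEdges (fun r hr₁ hr he => d.gv_not_mem_p hac hr₁ hr
      (Set.mem_singleton_iff.mp he ▸ Sym2.mem_mk_right _ _)) (Nat.zero_le _) le_rfl
  have h₂ : (C.deleteEdges {s(d.vs 0, d.gv)}).Adj (d.vs d.i) d.gv :=
    deleteEdges_adj.mpr ⟨d.adj_vs_i_gv, fun he => d.vs_i_not_mem_vs_zero_gv hac
      (Set.mem_singleton_iff.mp he ▸ Sym2.mem_mk_left _ _)⟩
  exact h₁.trans h₂.reachable

theorem mem_shifted_edgeSet {e : Sym2 W} : e ∈ d.shifted.edgeSet ↔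
    ((e ∈ C.edgeSet ∧ e ≠ d.p 1 ∧ e ≠ d.p 0 ∧ e ≠ d.p (d.i + 1)) ∨
      e = s(d.vs 0, d.vs d.i) ∨ e = s(d.vs 1, d.fv) ∨ e = s(d.vs 0, d.gv)) ∧ ¬e.IsDiag := by
  simp only [shifted, edgeSet_fromEdgeSet, Set.mem_sdiff, Set.mem_union, Set.mem_insert_iff,
    Set.mem_singleton_iff, Sym2.mem_diagSet]
  tauto

theorem shifted_adj_of_adj {a b : W} (h : C.Adj a b) (h₁ : s(a, b) ≠ d.p 1)
    (h₀ : s(a, b) ≠ d.p 0) (hl : s(a, b) ≠ d.p (d.i + 1)) : d.shifted.Adj a b :=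
  d.mem_shifted_edgeSet.mpr ⟨Or.inl ⟨h, h₁, h₀, hl⟩, Sym2.mk_isDiag_iff.not.mpr h.ne⟩

theorem shifted_adj_vs_zero_vs_i : d.shifted.Adj (d.vs 0) (d.vs d.i) :=
  d.mem_shifted_edgeSet.mpr ⟨by simp, Sym2.mk_isDiag_iff.not.mpr d.vs_zero_ne_vs_i⟩

theorem shifted_adj_vs_one_fv (hac : C.IsAcyclic) : d.shifted.Adj (d.vs 1) d.fv :=
  d.mem_shifted_edgeSet.mpr
    ⟨by simp, Sym2.mk_isDiag_iff.not.mpr (d.fv_ne_vs hac d.hi1).symm⟩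

theorem shifted_adj_vs_zero_gv (hac : C.IsAcyclic) : d.shifted.Adj (d.vs 0) d.gv :=
  d.mem_shifted_edgeSet.mpr
    ⟨by simp, Sym2.mk_isDiag_iff.not.mpr (d.gv_ne_vs hac (Nat.zero_le _)).symm⟩

theorem reachable_vs_shifted_deleteEdges (hac : C.IsAcyclic) {g : Sym2 W}
    (hg : ∀ r, 1 ≤ r → r ≤ d.i → g ≠ d.p r) (hg' : g ≠ s(d.vs 0, d.vs d.i)) {a b : ℕ}
    (ha : a ≤ d.i) (hb : b ≤ d.i) : (d.shifted.deleteEdges {g}).Reachable (d.vs a) (d.vs b) := by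
  suffices h : ∀ t, t ≤ d.i → (d.shifted.deleteEdges {g}).Reachable (d.vs 0) (d.vs t) from
    (h a ha).symm.trans (h b hb)
  intro t ht
  rcases Nat.eq_zero_or_pos t with rfl | ht₁
  · exact .refl _
  have hlast : (d.shifted.deleteEdges {g}).Adj (d.vs 0) (d.vs d.i) :=
    deleteEdges_adj.mpr
      ⟨d.shifted_adj_vs_zero_vs_i, fun he => hg' (Set.mem_singleton_iff.mp he).symm⟩
  refine hlast.reachable.trans (reachable_of_adj_succ d.vs ht fun r hr₁ hr => ?_).symm
  rw [deleteEdges_adj, Set.mem_singleton_iff, ← d.p_succ hr]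
  refine ⟨d.shifted_adj_of_adj (d.adj_vs_succ hr) ?_ ?_ ?_, (hg (r + 1) (by omega) hr).symm⟩
  · rw [← d.p_succ hr]
    refine (ne_of_mem_of_not_mem' (d.p_one ▸ Sym2.mem_mk_left _ _) ?_).symm
    rw [d.vs_mem_p_iff (by omega) hr (Nat.zero_le _)]
    omega
  · rw [← d.p_succ hr]
    exact (d.p_zero_ne_p hac (by omega) hr).symm
  · rw [← d.p_succ hr]
    exact (d.p_last_ne_p hac (by omega) hr).symm

variable {f : Sym2 W}

/-- The paper's canonical correspondence from the edges of `C` off the path `p 1, …, p i` to edges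
of `d.shifted` (on path edges the value is meaningless). -/
noncomputable def edgeImage (f : Sym2 W) : Sym2 W :=
  if f = d.p 0 then s(d.vs 1, d.fv) else if f = d.p (d.i + 1) then s(d.vs 0, d.gv) else f


theorem edgeImage_eq_vs_one_fv_iff (hac : C.IsAcyclic) (hf : f ∈ C.edgeSet) :
    d.edgeImage f = s(d.vs 1, d.fv) ↔ f = d.p 0 := by
  unfold edgeImage
  split_ifs with h₀ h₁
  · exact iff_of_true rfl h₀
  · exact iff_of_false
      (ne_of_mem_of_not_mem' (Sym2.mem_mk_left _ _) (d.vs_zero_not_mem_vs_one_fv hac)) h₀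
  · exact iff_of_false (fun h => d.mk_vs_one_fv_not_mem_edgeSet hac (h ▸ hf)) h₀

theorem edgeImage_eq_vs_zero_gv_iff (hac : C.IsAcyclic) (hf : f ∈ C.edgeSet) :
    d.edgeImage f = s(d.vs 0, d.gv) ↔ f = d.p (d.i + 1) := by
  unfold edgeImage
  split_ifs with h₀ h₁
  · exact iff_of_false
      (ne_of_mem_of_not_mem' (Sym2.mem_mk_left _ _) (d.vs_zero_not_mem_vs_one_fv hac)).symm
      (h₀ ▸ d.p_zero_ne_p_last hac)
  · exact iff_of_true rfl h₁
  · exact iff_of_false (fun h => d.mk_vs_zero_gv_not_mem_edgeSet hac (h ▸ hf)) h₁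

theorem eq_edgeImage_iff (hac : C.IsAcyclic) {e : Sym2 W} (he : e ∈ C.edgeSet)
    (h₀ : e ≠ d.p 0) (hl : e ≠ d.p (d.i + 1)) : e = d.edgeImage f ↔ e = f := by
  unfold edgeImage
  split_ifs with hf₀ hfl
  · exact iff_of_false (fun h => d.mk_vs_one_fv_not_mem_edgeSet hac (h ▸ he)) (hf₀ ▸ h₀)
  · exact iff_of_false (fun h => d.mk_vs_zero_gv_not_mem_edgeSet hac (h ▸ he)) (hfl ▸ hl)
  · exact Iff.rfl

theorem edgeImage_ne_p (hac : C.IsAcyclic) (hoff : ∀ t, 1 ≤ t → t ≤ d.i → f ≠ d.p t) {r : ℕ}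
    (hr₁ : 1 ≤ r) (hr : r ≤ d.i) : d.edgeImage f ≠ d.p r := by
  unfold edgeImage
  split_ifs
  · exact fun h => d.mk_vs_one_fv_not_mem_edgeSet hac (h ▸ d.hpedge r hr₁ hr)
  · exact fun h => d.mk_vs_zero_gv_not_mem_edgeSet hac (h ▸ d.hpedge r hr₁ hr)
  · exact hoff r hr₁ hr

theorem edgeImage_ne_vs_zero_vs_i (hac : C.IsAcyclic) (hf : f ∈ C.edgeSet)
    (hoff : ∀ t, 1 ≤ t → t ≤ d.i → f ≠ d.p t) : d.edgeImage f ≠ s(d.vs 0, d.vs d.i) := by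
  unfold edgeImage
  split_ifs
  · refine ne_of_mem_of_not_mem' (Sym2.mem_mk_right _ _) ?_
    rw [Sym2.mem_iff]
    rintro (h | h)
    exacts [d.fv_ne_vs hac (Nat.zero_le _) h, d.fv_ne_vs hac le_rfl h]
  · refine ne_of_mem_of_not_mem' (Sym2.mem_mk_right _ _) ?_
    rw [Sym2.mem_iff]
    rintro (h | h)
    exacts [d.gv_ne_vs hac (Nat.zero_le _) h, d.gv_ne_vs hac le_rfl h]
  · rintro rfl
    -- for `i = 1` the new edge `s(vs 0, vs i)` is the path edge `p 1` itself
    obtain hi | hi : d.i = 1 ∨ 2 ≤ d.i := by have := d.hi1; omega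
    · exact hoff 1 le_rfl d.hi1 (by rw [d.p_one, hi])
    · exact d.not_adj_vs hac (by omega) le_rfl hf

theorem edgeImage_mem_shifted_edgeSet (hac : C.IsAcyclic) (hf : f ∈ C.edgeSet)
    (hoff : ∀ t, 1 ≤ t → t ≤ d.i → f ≠ d.p t) : d.edgeImage f ∈ d.shifted.edgeSet := by
  unfold edgeImage
  split_ifs with h₀ hl
  · exact d.shifted_adj_vs_one_fv hac
  · exact d.shifted_adj_vs_zero_gv hac
  · exact d.mem_shifted_edgeSet.mpr
      ⟨Or.inl ⟨hf, hoff 1 le_rfl d.hi1, h₀, hl⟩, C.not_isDiag_of_mem_edgeSet hf⟩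

theorem exists_reachable_endpoints_edgeImage (hac : C.IsAcyclic) :
    ∃ z₁ z₂ z₁' z₂', f = s(z₁, z₂) ∧ d.edgeImage f = s(z₁', z₂') ∧
      (C.deleteEdges {f}).Reachable z₁ z₁' ∧ (C.deleteEdges {f}).Reachable z₂ z₂' := by
  unfold edgeImage
  split_ifs with h₀ hl
  · refine ⟨_, _, _, _, h₀.trans d.hp0, rfl,
      d.reachable_vs_deleteEdges (fun r hr₁ hr he => ?_) (Nat.zero_le _) d.hi1, .refl _⟩
    exact d.p_zero_ne_p hac hr₁ hr (h₀ ▸ Set.mem_singleton_iff.mp he).symm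
  · refine ⟨_, _, _, _, hl.trans d.hpi1, rfl,
      d.reachable_vs_deleteEdges (fun r hr₁ hr he => ?_) le_rfl (Nat.zero_le _), .refl _⟩
    exact d.p_last_ne_p hac hr₁ hr (hl ▸ Set.mem_singleton_iff.mp he).symm
  · clear h₀ hl
    induction f using Sym2.ind with
    | h a b => exact ⟨a, b, a, b, rfl, rfl, .refl _, .refl _⟩

theorem reachable_shifted_of_adj (hac : C.IsAcyclic) (hf : f ∈ C.edgeSet)
    (hoff : ∀ t, 1 ≤ t → t ≤ d.i → f ≠ d.p t) {a b : W} (h : (C.deleteEdges {f}).Adj a b) :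
    (d.shifted.deleteEdges {d.edgeImage f}).Reachable a b := by
  obtain ⟨hab, hne⟩ := deleteEdges_adj.mp h
  rw [Set.mem_singleton_iff] at hne
  have hpath {s t : ℕ} (hs : s ≤ d.i) (ht : t ≤ d.i) :=
    d.reachable_vs_shifted_deleteEdges hac (fun _ => d.edgeImage_ne_p hac hoff)
      (d.edgeImage_ne_vs_zero_vs_i hac hf hoff) hs ht
  by_cases h₁ : s(a, b) = d.p 1
  · exact Reachable.of_mk_eq (h₁.trans d.p_one) (hpath (Nat.zero_le _) d.hi1)
  by_cases h₀ : s(a, b) = d.p 0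
  · have hfv : (d.shifted.deleteEdges {d.edgeImage f}).Adj (d.vs 1) d.fv :=
      deleteEdges_adj.mpr ⟨d.shifted_adj_vs_one_fv hac, fun he => hne (h₀.trans
        ((d.edgeImage_eq_vs_one_fv_iff hac hf).mp (Set.mem_singleton_iff.mp he).symm).symm)⟩
    exact Reachable.of_mk_eq (h₀.trans d.hp0)
      ((hpath (Nat.zero_le _) d.hi1).trans hfv.reachable)
  by_cases hl : s(a, b) = d.p (d.i + 1)
  · have hgv : (d.shifted.deleteEdges {d.edgeImage f}).Adj (d.vs 0) d.gv :=
      deleteEdges_adj.mpr ⟨d.shifted_adj_vs_zero_gv hac, fun he => hne (hl.trans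
        ((d.edgeImage_eq_vs_zero_gv_iff hac hf).mp (Set.mem_singleton_iff.mp he).symm).symm)⟩
    exact Reachable.of_mk_eq (hl.trans d.hpi1)
      ((hpath le_rfl (Nat.zero_le _)).trans hgv.reachable)
  exact (deleteEdges_adj.mpr ⟨d.shifted_adj_of_adj hab h₁ h₀ hl, fun he =>
    hne ((d.eq_edgeImage_iff hac hab h₀ hl).mp (Set.mem_singleton_iff.mp he))⟩).reachable

theorem reachable_of_shifted_adj (hac : C.IsAcyclic) (hf : f ∈ C.edgeSet)
    (hoff : ∀ t, 1 ≤ t → t ≤ d.i → f ≠ d.p t) {a b : W}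
    (h : (d.shifted.deleteEdges {d.edgeImage f}).Adj a b) : (C.deleteEdges {f}).Reachable a b := by
  obtain ⟨hab, hne⟩ := deleteEdges_adj.mp h
  rw [Set.mem_singleton_iff] at hne
  have hpath {s t : ℕ} (hs : s ≤ d.i) (ht : t ≤ d.i) :=
    d.reachable_vs_deleteEdges (S := {f})
      (fun r hr₁ hr he => hoff r hr₁ hr (Set.mem_singleton_iff.mp he).symm) hs ht
  rcases (d.mem_shifted_edgeSet.mp ((mem_edgeSet _).mpr hab)).1 with ⟨hC, -, h₀, hl⟩ | he | he | he
  · exact (deleteEdges_adj.mpr ⟨hC, fun he =>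
      hne ((d.eq_edgeImage_iff hac hC h₀ hl).mpr (Set.mem_singleton_iff.mp he))⟩).reachable
  · exact Reachable.of_mk_eq he (hpath (Nat.zero_le _) le_rfl)
  · have hf₀ : f ≠ d.p 0 := fun hf₀ =>
      hne (he.trans ((d.edgeImage_eq_vs_one_fv_iff hac hf).mpr hf₀).symm)
    have hfv : (C.deleteEdges {f}).Adj (d.vs 0) d.fv := deleteEdges_adj.mpr
      ⟨d.adj_vs_zero_fv, fun he => hf₀ (d.hp0.trans (Set.mem_singleton_iff.mp he)).symm⟩
    exact Reachable.of_mk_eq he ((hpath d.hi1 (Nat.zero_le _)).trans hfv.reachable)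
  · have hfl : f ≠ d.p (d.i + 1) := fun hfl =>
      hne (he.trans ((d.edgeImage_eq_vs_zero_gv_iff hac hf).mpr hfl).symm)
    have hgv : (C.deleteEdges {f}).Adj (d.vs d.i) d.gv := deleteEdges_adj.mpr
      ⟨d.adj_vs_i_gv, fun he => hfl (d.hpi1.trans (Set.mem_singleton_iff.mp he)).symm⟩
    exact Reachable.of_mk_eq he ((hpath (Nat.zero_le _) le_rfl).trans hgv.reachable)

theorem reachable_deleteEdges_iff_shifted (hac : C.IsAcyclic) (hf : f ∈ C.edgeSet)
    (hoff : ∀ t, 1 ≤ t → t ≤ d.i → f ≠ d.p t) (a b : W) :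
    (C.deleteEdges {f}).Reachable a b ↔ (d.shifted.deleteEdges {d.edgeImage f}).Reachable a b :=
  ⟨.of_forall_adj fun _ _ => d.reachable_shifted_of_adj hac hf hoff,
    .of_forall_adj fun _ _ => d.reachable_of_shifted_adj hac hf hoff⟩

end BranchData

theorem offpath_width_unchanged_general {V W : Type*} [Fintype V]
    (w : V → V → ℝ)
    (C : SimpleGraph W) (φ : V → W) (htp : IsTreePosition C φ)
    (x y : Sym2 W) (d : BranchData C x y) :
    ∀ f ∈ C.edgeSet, (∀ t, 1 ≤ t → t ≤ d.i → f ≠ d.p t) →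
      bWidth w d.shifted φ
          (if f = d.p 0 then s(d.vs 1, d.fv)
           else if f = d.p (d.i + 1) then s(d.vs 0, d.gv)
           else f) =
        bWidth w C φ f := by
  intro f hf hoff
  have hT : C.IsTree := htp.1.1
  have hiff := d.reachable_deleteEdges_iff_shifted hT.isAcyclic hf hoff
  have hadj := d.edgeImage_mem_shifted_edgeSet hT.isAcyclic hf hoff
  obtain ⟨z₁, z₂, z₁', z₂', rfl, himage, h₁, h₂⟩ :=
    d.exists_reachable_endpoints_edgeImage (f := f) hT.isAcyclic
  change bWidth w d.shifted φ (d.edgeImage _) = _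
  rw [himage] at hiff hadj ⊢
  exact bWidth_eq_of_reachable_deleteEdges_iff w φ hT.connected.preconnected
    (isAcyclic_iff_forall_isBridge.mp hT.isAcyclic hf) hadj hiff h₁ h₂

/-- Let `(C',φ)` be the branch shift of `x` to `y` applied to a tree
position `(C,φ)` of `G`, where `x` and `y` are nonadjacent edges of `C`.  Then every edge of
`C` that does not lie on the simple path `p 1, …, p i` from `x` to `y` has the same width in
`(C',φ)` (under the canonical correspondence of edges, which moves `p 0` to `s(vs 1, fv)`
and `p (i+1)` to `s(vs 0, gv)` and fixes every other non-path edge) as it had in `(C,φ)`. -/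
theorem offpath_width_unchanged {V W : Type*} [Fintype V] [Fintype W]
    (w : V → V → ℝ) (hsymm : ∀ u v, w u v = w v u) (hnn : ∀ u v, 0 ≤ w u v)
    (hdiag : ∀ v, w v v = 0)
    (C : SimpleGraph W) (φ : V → W) (htp : IsTreePosition C φ)
    (x y : Sym2 W) (d : BranchData C x y) :
    ∀ f ∈ C.edgeSet, (∀ t, 1 ≤ t → t ≤ d.i → f ≠ d.p t) →
      bWidth w d.shifted φ
          (if f = d.p 0 then s(d.vs 1, d.fv)
           else if f = d.p (d.i + 1) then s(d.vs 0, d.gv)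
           else f) =
        bWidth w C φ f :=
  offpath_width_unchanged_general w C φ htp x y d
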